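/- arXiv:1604.05487 — 4 statements merged into one kernel-verified Lean document; each statement's English description precedes it below -/
import Mathlib

section
/- In every legal configuration of the crossover gadget, the two vertical external edges A and B do not both point outward (away from the gadget); equivalently, A can point outward only if B points inward, and vice versa. Moreover, there exists a legal configuration in which A points outward and a legal configuration in which B points outward. -/
/-! The crossover gadget of Nondeterministic Constraint Logic.

Vertices `u1, …, u10` are represented by `0, …, 9 : Fin 10`.  Edges `A, B, C, D, E`
have weight 2 ("blue"), the remaining edges weight 1 ("red").  `A, B, C, D` are
dangling (external) edges; `A` and `B` are the vertical external edges. -/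

inductive CEdge
  | A | B | C | D | E | F | G | H | I | J | K | L | M | N | O | P | Q | R | S
  deriving DecidableEq

instance : Fintype CEdge :=
  ⟨{.A, .B, .C, .D, .E, .F, .G, .H, .I, .J, .K, .L, .M, .N, .O, .P, .Q, .R, .S},
    fun x => by cases x <;> simp⟩

namespace Crossover

/-- Edge weights: `A, B, C, D, E` are weight-2, the rest weight-1. -/
def weight : CEdge → ℕ
  | .A | .B | .C | .D | .E => 2
  | _ => 1

/-- Endpoints of the edges.  The second component is `none` for a dangling
(external) edge, whose unique gadget vertex is the first component. -/
def ends : CEdge → Fin 10 × Option (Fin 10)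
  | .C => (0, none)      -- C dangling at u1
  | .A => (4, none)      -- A dangling at u5
  | .B => (5, none)      -- B dangling at u6
  | .D => (9, none)      -- D dangling at u10
  | .E => (3, some 6)    -- E : u4–u7
  | .K => (0, some 1)    -- K : u1–u2
  | .L => (0, some 2)    -- L : u1–u3
  | .H => (1, some 2)    -- H : u2–u3
  | .I => (1, some 3)    -- I : u2–u4
  | .J => (2, some 3)    -- J : u3–u4
  | .F => (1, some 4)    -- F : u2–u5
  | .G => (2, some 5)    -- G : u3–u6
  | .M => (4, some 7)    -- M : u5–u8
  | .N => (5, some 8)    -- N : u6–u9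
  | .P => (6, some 7)    -- P : u7–u8
  | .Q => (6, some 8)    -- Q : u7–u9
  | .O => (7, some 8)    -- O : u8–u9
  | .R => (7, some 9)    -- R : u8–u10
  | .S => (8, some 9)    -- S : u9–u10

/-- A configuration assigns a direction to every edge.  For a dangling edge,
`true` means pointing inward (towards its gadget vertex); for an internal edge
with endpoints `(v, some w)`, `true` means pointing towards `w`. -/
abbrev Config := CEdge → Bool

/-- The vertex an edge points into (`none` exactly when a dangling edge points
outward, away from the gadget). -/
def head (cfg : Config) (e : CEdge) : Option (Fin 10) :=
  match ends e, cfg e with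
  | (v, none), true => some v
  | (_, none), false => none
  | (_, some w), true => some w
  | (v, some _), false => some v

/-- The inflow of a vertex: the sum of the weights of the edges directed into it. -/
def inflow (cfg : Config) (v : Fin 10) : ℕ :=
  ∑ e : CEdge, if head cfg e = some v then weight e else 0

/-- A configuration is legal if every vertex has inflow at least 2. -/
def Legal (cfg : Config) : Prop := ∀ v : Fin 10, 2 ≤ inflow cfg v

/-- A dangling (external) edge points inward. -/
def Inward (cfg : Config) (e : CEdge) : Prop := cfg e = true

/-- A dangling (external) edge points outward. -/
def Outward (cfg : Config) (e : CEdge) : Prop := cfg e = false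

end Crossover

/-! If `A` and `B` both point outward, each of `u5`, `u6` is left with two red edges, so `F`, `M`
point into `u5` and `G`, `N` into `u6`. Then `u2` and `u3` must draw four units from `K`, `L`,
`H`, `I`, `J`, of which `H` serves only one of them; hence at most one of `I`, `J` points into
`u4`, which forces `E` into `u4` and so `P`, `Q` into `u7`. Now `u8` and `u9` need four units
from `O`, `R`, `S`, which carry only three. Both witnesses are explicit legal configurations. -/

namespace Crossover

lemma sum_univ_eq (f : CEdge → ℕ) : ∑ e, f e =
    f .A + f .B + f .C + f .D + f .E + f .F + f .G + f .H + f .I + f .J + f .K +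
    f .L + f .M + f .N + f .O + f .P + f .Q + f .R + f .S := by
  rw [Finset.sum_eq_multiset_sum]
  change (Multiset.map f
    (↑[CEdge.A, .B, .C, .D, .E, .F, .G, .H, .I, .J, .K, .L, .M, .N, .O, .P, .Q, .R, .S])).sum = _
  simp only [Multiset.map_coe, Multiset.sum_coe, List.map_cons, List.map_nil, List.sum_cons,
    List.sum_nil]
  ring

lemma head_eq_cond (cfg : Config) (e : CEdge) :
    head cfg e = bif cfg e then head (fun _ => true) e else head (fun _ => false) e := by
  cases h : cfg e <;> simp only [head, h, cond_true, cond_false]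

lemma ite_cond_eq {α : Type*} [DecidableEq α] (b : Bool) (x y z : α) (n : ℕ) :
    (if (bif b then x else y) = z then n else 0) =
      bif b then (if x = z then n else 0) else (if y = z then n else 0) := by
  cases b <;> rfl

lemma inflow_eq_sum_cond (cfg : Config) (v : Fin 10) :
    inflow cfg v = ∑ e, bif cfg e
      then (if head (fun _ => true) e = some v then weight e else 0)
      else (if head (fun _ => false) e = some v then weight e else 0) := by
  simp only [inflow, head_eq_cond cfg, ite_cond_eq]

section InflowAtVertex

variable (cfg : Config)

lemma inflow_u2 : inflow cfg 1 = (bif cfg .F then 0 else 1) + (bif cfg .H then 0 else 1) +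
    (bif cfg .I then 0 else 1) + (bif cfg .K then 1 else 0) := by
  simp +decide only [inflow_eq_sum_cond, sum_univ_eq, weight, ↓reduceIte, Bool.cond_self,
    add_zero, zero_add]

lemma inflow_u3 : inflow cfg 2 = (bif cfg .G then 0 else 1) + (bif cfg .H then 1 else 0) +
    (bif cfg .J then 0 else 1) + (bif cfg .L then 1 else 0) := by
  simp +decide only [inflow_eq_sum_cond, sum_univ_eq, weight, ↓reduceIte, Bool.cond_self,
    add_zero, zero_add]

lemma inflow_u4 : inflow cfg 3 = (bif cfg .E then 0 else 2) + (bif cfg .I then 1 else 0) +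
    (bif cfg .J then 1 else 0) := by
  simp +decide only [inflow_eq_sum_cond, sum_univ_eq, weight, ↓reduceIte, Bool.cond_self,
    add_zero, zero_add]

lemma inflow_u5 : inflow cfg 4 = (bif cfg .A then 2 else 0) + (bif cfg .F then 1 else 0) +
    (bif cfg .M then 0 else 1) := by
  simp +decide only [inflow_eq_sum_cond, sum_univ_eq, weight, ↓reduceIte, Bool.cond_self,
    add_zero]

lemma inflow_u6 : inflow cfg 5 = (bif cfg .B then 2 else 0) + (bif cfg .G then 1 else 0) +
    (bif cfg .N then 0 else 1) := by
  simp +decide only [inflow_eq_sum_cond, sum_univ_eq, weight, ↓reduceIte, Bool.cond_self,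
    add_zero, zero_add]

lemma inflow_u7 : inflow cfg 6 = (bif cfg .E then 2 else 0) + (bif cfg .P then 0 else 1) +
    (bif cfg .Q then 0 else 1) := by
  simp +decide only [inflow_eq_sum_cond, sum_univ_eq, weight, ↓reduceIte, Bool.cond_self,
    add_zero, zero_add]

lemma inflow_u8 : inflow cfg 7 = (bif cfg .M then 1 else 0) + (bif cfg .O then 0 else 1) +
    (bif cfg .P then 1 else 0) + (bif cfg .R then 0 else 1) := by
  simp +decide only [inflow_eq_sum_cond, sum_univ_eq, weight, ↓reduceIte, Bool.cond_self,
    add_zero, zero_add]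

lemma inflow_u9 : inflow cfg 8 = (bif cfg .N then 1 else 0) + (bif cfg .O then 1 else 0) +
    (bif cfg .Q then 1 else 0) + (bif cfg .S then 0 else 1) := by
  simp +decide only [inflow_eq_sum_cond, sum_univ_eq, weight, ↓reduceIte, Bool.cond_self,
    add_zero, zero_add]

end InflowAtVertex

namespace Legal

variable {cfg : Config}

lemma F_M_into_u5 (hcfg : Legal cfg) (hA : Outward cfg .A) : cfg .F = true ∧ cfg .M = false := by
  have h := hcfg 4
  rw [Outward] at hA
  rw [inflow_u5, hA] at h
  revert h; cases cfg .F <;> cases cfg .M <;> decide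

lemma G_N_into_u6 (hcfg : Legal cfg) (hB : Outward cfg .B) : cfg .G = true ∧ cfg .N = false := by
  have h := hcfg 5
  rw [Outward] at hB
  rw [inflow_u6, hB] at h
  revert h; cases cfg .G <;> cases cfg .N <;> decide

lemma not_I_J_into_u4 (hcfg : Legal cfg) (hF : cfg .F = true) (hG : cfg .G = true) :
    ¬ (cfg .I = true ∧ cfg .J = true) := by
  have h2 := hcfg 1
  have h3 := hcfg 2
  rw [inflow_u2, hF] at h2
  rw [inflow_u3, hG] at h3
  revert h2 h3
  cases cfg .H <;> cases cfg .I <;> cases cfg .J <;> cases cfg .K <;> cases cfg .L <;> decide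

lemma E_into_u4 (hcfg : Legal cfg) (hIJ : ¬ (cfg .I = true ∧ cfg .J = true)) :
    cfg .E = false := by
  have h := hcfg 3
  rw [inflow_u4] at h
  revert h hIJ; cases cfg .E <;> cases cfg .I <;> cases cfg .J <;> decide

lemma P_Q_into_u7 (hcfg : Legal cfg) (hE : cfg .E = false) : cfg .P = false ∧ cfg .Q = false := by
  have h := hcfg 6
  rw [inflow_u7, hE] at h
  revert h; cases cfg .P <;> cases cfg .Q <;> decide

lemma not_M_N_P_Q_away_from_u8_u9 (hcfg : Legal cfg) (hM : cfg .M = false) (hN : cfg .N = false)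
    (hP : cfg .P = false) (hQ : cfg .Q = false) : False := by
  have h8 := hcfg 7
  have h9 := hcfg 8
  rw [inflow_u8, hM, hP] at h8
  rw [inflow_u9, hN, hQ] at h9
  revert h8 h9
  cases cfg .O <;> cases cfg .R <;> cases cfg .S <;> decide

lemma not_outward_A_and_B (hcfg : Legal cfg) : ¬ (Outward cfg .A ∧ Outward cfg .B) := by
  rintro ⟨hA, hB⟩
  obtain ⟨hF, hM⟩ := hcfg.F_M_into_u5 hA
  obtain ⟨hG, hN⟩ := hcfg.G_N_into_u6 hB
  have hE := hcfg.E_into_u4 (hcfg.not_I_J_into_u4 hF hG)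
  obtain ⟨hP, hQ⟩ := hcfg.P_Q_into_u7 hE
  exact hcfg.not_M_N_P_Q_away_from_u8_u9 hM hN hP hQ

end Legal

lemma exists_legal_outward_A : ∃ cfg : Config, Legal cfg ∧ Outward cfg .A :=
  ⟨fun | .A | .G | .H | .M | .R => false | _ => true, by unfold Legal; decide, rfl⟩

lemma exists_legal_outward_B : ∃ cfg : Config, Legal cfg ∧ Outward cfg .B :=
  ⟨fun | .B | .F | .N => false | _ => true, by unfold Legal; decide, rfl⟩

end Crossover

open Crossover in
/-- In every legal configuration of the crossover gadget the vertical external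
edges `A` and `B` do not both point outward; moreover there is a legal
configuration in which `A` points outward and one in which `B` points outward. -/
theorem crossover_vertical_external_edges :
    (∀ cfg : Config, Legal cfg → ¬ (Outward cfg .A ∧ Outward cfg .B)) ∧
    (∃ cfg : Config, Legal cfg ∧ Outward cfg .A) ∧
    (∃ cfg : Config, Legal cfg ∧ Outward cfg .B) :=
  ⟨fun _ hcfg => hcfg.not_outward_A_and_B, exists_legal_outward_A, exists_legal_outward_B⟩
end

section
/- In generalized Klondike with m suits each of n ranks, starting from an initial configuration (all cards face-down in the build stacks and all suit stacks empty), every winning sequence of moves contains exactly mn moves of type 1 (turning a card face-up), exactly mn moves of type 3 (moving a card to a suit stack), and at most mn moves of type 2 (moving a whole card block onto another card block); in particular, every winning sequence has length at most 3mn. -/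
/-! Generalized Klondike (without pile stack and talon), played with `m` suits,
each colored red or black and containing cards of ranks `0, …, n-1`
(rank `0` is the Ace, rank `n-1` the King). -/

namespace Klondike

/-- A card: a suit together with a rank (`0`-based, so rank `0` is the Ace). -/
abbrev Card (m n : ℕ) := Fin m × Fin n

/-- A Klondike configuration: `m` suit stacks and `b` build stacks.  The head of
each list is the top of the stack; the `Bool` records whether a card in a build
stack is face-up (`true`) or face-down (`false`). -/
structure Config (m n b : ℕ) where
  suit : Fin m → List (Card m n)
  build : Fin b → List (Card m n × Bool)

variable {m n b : ℕ}

/-- A suit stack accepts a card: an empty suit stack accepts exactly the Aces, and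
a nonempty one with top card `t` accepts `c` iff `c` has the same suit as `t` and
rank one higher. -/
def suitAccepts : List (Card m n) → Card m n → Prop
  | [], c => c.2.val = 0
  | t :: _, c => c.1 = t.1 ∧ c.2.val = t.2.val + 1

/-- The card block of a build stack: its face-up topmost cards. -/
def cardBlock (l : List (Card m n × Bool)) : List (Card m n × Bool) :=
  l.takeWhile fun x => x.2

/-- The build stack `l` (via its nonempty card block, with top card `t`) accepts a
card `c` iff the suits of `c` and `t` have different colors and the rank of `c` is
one lower than the rank of `t`. -/
def blockAccepts (color : Fin m → Bool) : List (Card m n × Bool) → Card m n → Prop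
  | (t, true) :: _, c => color c.1 ≠ color t.1 ∧ c.2.val + 1 = t.2.val
  | _, _ => False

/-- The three types of moves. -/
inductive MoveType
  | turn    -- type 1: turn the top card of an all-face-down build stack face-up
  | block   -- type 2: move a whole card block onto another card block
  | toSuit  -- type 3: move the top card of a card block onto a suit stack
  deriving DecidableEq

/-- One move transforming configuration `c` into `c'`. -/
def Step (color : Fin m → Bool) (c c' : Config m n b) : MoveType → Prop
  | .turn => ∃ (i : Fin b) (x : Card m n) (rest : List (Card m n × Bool)),
      c.build i = (x, false) :: rest ∧
      (∀ y ∈ c.build i, y.2 = false) ∧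
      c'.suit = c.suit ∧
      c'.build = Function.update c.build i ((x, true) :: rest)
  | .block => ∃ i j : Fin b, i ≠ j ∧
      cardBlock (c.build i) ≠ [] ∧
      (∃ bottom, (cardBlock (c.build i)).getLast? = some bottom ∧
        blockAccepts color (c.build j) bottom.1) ∧
      c'.suit = c.suit ∧
      c'.build =
        Function.update (Function.update c.build i ((c.build i).dropWhile fun x => x.2))
          j (cardBlock (c.build i) ++ c.build j)
  | .toSuit => ∃ (i : Fin b) (s : Fin m) (x : Card m n)
        (rest : List (Card m n × Bool)),
      c.build i = (x, true) :: rest ∧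
      suitAccepts (c.suit s) x ∧
      c'.build = Function.update c.build i rest ∧
      c'.suit = Function.update c.suit s (x :: c.suit s)

/-- A play: a sequence of moves, each recorded with its type and the configuration
it produces. -/
def Play (color : Fin m → Bool) : Config m n b → List (MoveType × Config m n b) → Prop
  | _, [] => True
  | c, (t, c') :: rest => Step color c c' t ∧ Play color c' rest

/-- The configuration reached at the end of a play starting at `c`. -/
def finalConfig (c : Config m n b) (l : List (MoveType × Config m n b)) : Config m n b :=
  (l.map Prod.snd).getLastD c

/-- The player has won: all cards have been moved to the suit stacks. -/
def AllOnSuits (c : Config m n b) : Prop := ∀ i, c.build i = []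

/-- An initial configuration: the suit stacks are empty, all cards lie face-down
in the build stacks, and every card occurs exactly once. -/
def Initial (c : Config m n b) : Prop :=
  (∀ s, c.suit s = []) ∧
  (∀ i, ∀ y ∈ c.build i, y.2 = false) ∧
  (∀ x : Card m n, (∑ i, ((c.build i).map Prod.fst).count x) = 1)

end Klondike

/-!
Three potentials on the build stacks count the moves. The number of face-down cards drops by
one at a type-1 move and is unchanged otherwise; the number of cards in the build stacks drops
by one at a type-3 move and is unchanged otherwise. For type 2, count the build-stack cards that
do not lie directly on a face-up card: the bottom card of a moved block lay on a face-down card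
or on the table (the block was maximal) and lands on a face-up card, so this count drops by one,
while no move increases it. All three potentials equal `m * n` initially and `0` once the game
is won.
-/

lemma Fintype.sum_apply_update_add {ι β M : Type*} [Fintype ι] [DecidableEq ι] [AddCommMonoid M]
    (g : β → M) (f : ι → β) (i : ι) (v : β) :
    ∑ j, g (Function.update f i v j) + g (f i) = ∑ j, g (f j) + g v := by
  simp_rw [Function.apply_update (fun _ => g)]
  rw [Finset.sum_update_of_mem (Finset.mem_univ i),
    Finset.sum_eq_add_sum_sdiff_singleton_of_mem (Finset.mem_univ i) (fun j => g (f j))]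
  abel

lemma List.sum_count_eq_length {α : Type*} [Fintype α] [BEq α] [LawfulBEq α]
    (l : List α) : ∑ x, l.count x = l.length := by
  induction l with
  | nil => simp
  | cons a l ih =>
    simp only [List.count_cons, Finset.sum_add_distrib, ih, List.length_cons, add_right_inj]
    rw [Finset.sum_eq_single a (fun x _ hx => by simp [Ne.symm hx]) (by simp)]
    simp

namespace Klondike

section Stack

variable {α : Type*}

def topNotFaceUp : List (α × Bool) → ℕ
  | (_, true) :: _ => 0
  | _ => 1

def countNotOnFaceUp : List (α × Bool) → ℕ
  | [] => 0
  | _ :: rest => topNotFaceUp rest + countNotOnFaceUp rest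

@[simp] lemma topNotFaceUp_cons (x : α × Bool) (l : List (α × Bool)) :
    topNotFaceUp (x :: l) = if x.2 then 0 else 1 := by
  obtain ⟨_, _ | _⟩ := x <;> rfl

@[simp] lemma countNotOnFaceUp_cons (x : α × Bool) (l : List (α × Bool)) :
    countNotOnFaceUp (x :: l) = topNotFaceUp l + countNotOnFaceUp l := rfl

lemma topNotFaceUp_dropWhile (l : List (α × Bool)) :
    topNotFaceUp (l.dropWhile fun x => x.2) = 1 := by
  induction l with
  | nil => rfl
  | cons x xs ih => by_cases h : x.2 <;> simp [h, ih]

lemma countNotOnFaceUp_append_of_faceUp {A : List (α × Bool)} (hA : A ≠ [])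
    (hup : ∀ a ∈ A, a.2) (B : List (α × Bool)) :
    countNotOnFaceUp (A ++ B) = topNotFaceUp B + countNotOnFaceUp B := by
  induction A with
  | nil => exact absurd rfl hA
  | cons a A ih =>
    cases A with
    | nil => simp
    | cons a' A' =>
      rw [List.cons_append, countNotOnFaceUp_cons, ih (List.cons_ne_nil _ _)
        (fun x hx => hup x (List.mem_cons_of_mem _ hx))]
      simp [hup a' (by simp)]

lemma countNotOnFaceUp_of_faceDown {l : List (α × Bool)} (h : ∀ y ∈ l, y.2 = false) :
    countNotOnFaceUp l = l.length := by
  induction l with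
  | nil => rfl
  | cons x xs ih =>
    rw [countNotOnFaceUp_cons, ih (fun y hy => h y (List.mem_cons_of_mem _ hy))]
    cases xs with
    | nil => rfl
    | cons y ys => simp [h y (by simp)]; omega

end Stack

lemma MoveType.length_eq_count_add_count_add_count (l : List MoveType) :
    l.length = l.count .turn + l.count .block + l.count .toSuit := by
  induction l with
  | nil => rfl
  | cons t rest ih => cases t <;> simp [ih] <;> omega

variable {m n b : ℕ} {color : Fin m → Bool}

def Config.buildSum (g : List (Card m n × Bool) → ℕ) (c : Config m n b) : ℕ :=
  ∑ i, g (c.build i)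

section Step

variable {c c' : Config m n b} {t : MoveType}

lemma Step.buildSum_turn (h : Step color c c' .turn) :
    ∃ x rest, ∀ g,
      c'.buildSum g + g ((x, false) :: rest) = c.buildSum g + g ((x, true) :: rest) := by
  obtain ⟨i, x, rest, hi, -, -, hc'⟩ := h
  refine ⟨x, rest, fun g => ?_⟩
  simpa [Config.buildSum, hc', hi] using
    Fintype.sum_apply_update_add g c.build i ((x, true) :: rest)

lemma Step.buildSum_toSuit (h : Step color c c' .toSuit) :
    ∃ x rest, ∀ g, c'.buildSum g + g ((x, true) :: rest) = c.buildSum g + g rest := by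
  obtain ⟨i, -, x, rest, hi, -, hc', -⟩ := h
  refine ⟨x, rest, fun g => ?_⟩
  simpa [Config.buildSum, hc', hi] using Fintype.sum_apply_update_add g c.build i rest

/-- `A` is the moved card block, `B` the rest of its source stack and `C` the target stack. -/
lemma Step.buildSum_block (h : Step color c c' .block) :
    ∃ A B C : List (Card m n × Bool), A ≠ [] ∧ (∀ a ∈ A, a.2) ∧
      topNotFaceUp B = 1 ∧ topNotFaceUp C = 0 ∧
      ∀ g, c'.buildSum g + g (A ++ B) + g C = c.buildSum g + g B + g (A ++ C) := by
  obtain ⟨i, j, hij, hA, ⟨_, -, hacc⟩, -, hc'⟩ := h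
  set A := cardBlock (c.build i)
  set B := (c.build i).dropWhile fun x => x.2
  have hAB : A ++ B = c.build i := List.takeWhile_append_dropWhile
  have hC : topNotFaceUp (c.build j) = 0 := by
    revert hacc; rcases c.build j with _ | ⟨⟨_, _ | _⟩, _⟩ <;> simp [blockAccepts]
  refine ⟨A, B, c.build j, hA, fun a ha => List.mem_takeWhile_imp ha,
    topNotFaceUp_dropWhile _, hC, fun g => ?_⟩
  have hi := Fintype.sum_apply_update_add g c.build i B
  have hj := Fintype.sum_apply_update_add g (Function.update c.build i B) j (A ++ c.build j)
  rw [Function.update_of_ne hij.symm] at hj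
  rw [hAB]
  simp only [Config.buildSum, hc']
  omega

lemma Step.buildSum_faceDown_add (h : Step color c c' t) :
    c'.buildSum (List.countP fun y => !y.2) + (if t = .turn then 1 else 0) =
      c.buildSum (List.countP fun y => !y.2) := by
  cases t
  · obtain ⟨x, rest, hg⟩ := h.buildSum_turn
    have := hg (List.countP fun y => !y.2)
    simp only [List.countP_cons, Bool.not_false, Bool.not_true, Bool.false_eq_true,
      reduceIte] at this
    simp only [if_true]
    omega
  · obtain ⟨A, B, C, -, -, -, -, hg⟩ := h.buildSum_block
    have := hg (List.countP fun y => !y.2)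
    simp only [List.countP_append] at this
    simp only [reduceCtorEq, if_false]
    omega
  · obtain ⟨x, rest, hg⟩ := h.buildSum_toSuit
    have := hg (List.countP fun y => !y.2)
    simp only [List.countP_cons, Bool.not_true, Bool.false_eq_true, reduceIte] at this
    simp only [reduceCtorEq, if_false]
    omega

lemma Step.buildSum_length_add (h : Step color c c' t) :
    c'.buildSum List.length + (if t = .toSuit then 1 else 0) = c.buildSum List.length := by
  cases t
  · obtain ⟨x, rest, hg⟩ := h.buildSum_turn
    simpa using hg List.length
  · obtain ⟨A, B, C, -, -, -, -, hg⟩ := h.buildSum_block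
    have := hg List.length
    simp only [List.length_append] at this
    simp only [reduceCtorEq, if_false]
    omega
  · obtain ⟨x, rest, hg⟩ := h.buildSum_toSuit
    have := hg List.length
    simp only [List.length_cons] at this
    simp only [if_true]
    omega

lemma Step.buildSum_countNotOnFaceUp_add_le (h : Step color c c' t) :
    c'.buildSum countNotOnFaceUp + (if t = .block then 1 else 0) ≤
      c.buildSum countNotOnFaceUp := by
  cases t
  · obtain ⟨x, rest, hg⟩ := h.buildSum_turn
    simpa using (hg countNotOnFaceUp).le
  · obtain ⟨A, B, C, hA, hup, hB, hC, hg⟩ := h.buildSum_block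
    have := hg countNotOnFaceUp
    rw [countNotOnFaceUp_append_of_faceUp hA hup, countNotOnFaceUp_append_of_faceUp hA hup,
      hB, hC] at this
    simp only [if_true]
    omega
  · obtain ⟨x, rest, hg⟩ := h.buildSum_toSuit
    have := hg countNotOnFaceUp
    simp only [countNotOnFaceUp_cons] at this
    simp only [reduceCtorEq, if_false]
    omega

end Step

section Play

variable {P : Config m n b → ℕ} {t₀ : MoveType}

@[simp] lemma finalConfig_cons (c c' : Config m n b) (t : MoveType)
    (l : List (MoveType × Config m n b)) :
    finalConfig c ((t, c') :: l) = finalConfig c' l := by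
  simp only [finalConfig, List.map_cons, List.getLastD_cons]

lemma Play.potential_eq
    (hP : ∀ {c c' t}, Step color c c' t → P c' + (if t = t₀ then 1 else 0) = P c) :
    ∀ {c l}, Play color c l → P c = P (finalConfig c l) + (l.map Prod.fst).count t₀
  | _, [], _ => rfl
  | _, (_, _) :: _, ⟨hstep, hrest⟩ => by
    rw [← hP hstep, hrest.potential_eq hP]
    simp [List.count_cons, add_assoc]

lemma Play.potential_add_le
    (hP : ∀ {c c' t}, Step color c c' t → P c' + (if t = t₀ then 1 else 0) ≤ P c) :
    ∀ {c l}, Play color c l → P (finalConfig c l) + (l.map Prod.fst).count t₀ ≤ P c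
  | _, [], _ => le_rfl
  | _, (_, _) :: _, ⟨hstep, hrest⟩ => by
    have := hrest.potential_add_le hP
    simp only [finalConfig_cons, List.map_cons, List.count_cons, beq_iff_eq]
    exact le_trans (by omega) (hP hstep)

end Play

lemma Initial.buildSum_eq {c : Config m n b} (hc : Initial c) {g : List (Card m n × Bool) → ℕ}
    (hg : ∀ l, (∀ y ∈ l, y.2 = false) → g l = l.length) :
    c.buildSum g = m * n := by
  obtain ⟨-, hdown, hcount⟩ := hc
  calc c.buildSum g = ∑ i, (c.build i).length :=
        Finset.sum_congr rfl fun i _ => hg _ (hdown i)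
    _ = ∑ x : Card m n, ∑ i, ((c.build i).map Prod.fst).count x := by
        rw [Finset.sum_comm]
        refine Finset.sum_congr rfl fun i _ => ?_
        rw [List.sum_count_eq_length, List.length_map]
    _ = m * n := by simp [hcount]

lemma AllOnSuits.buildSum_eq_zero {c : Config m n b} (hc : AllOnSuits c)
    {g : List (Card m n × Bool) → ℕ} (hg : g [] = 0) : c.buildSum g = 0 :=
  Finset.sum_eq_zero fun i _ => by rw [hc i, hg]

end Klondike

open Klondike in
/-- Starting from an initial configuration of generalized Klondike with `m` suits
of `n` ranks, every winning sequence of moves contains exactly `m*n` moves of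
type 1 (turning a card face-up), exactly `m*n` moves of type 3 (moving a card to a
suit stack) and at most `m*n` moves of type 2 (moving a whole card block onto
another card block); in particular it has length at most `3*m*n`. -/
theorem klondike_winning_sequence_counts
    (m n b : ℕ) (color : Fin m → Bool) (c₀ : Config m n b)
    (hinit : Initial c₀)
    (l : List (MoveType × Config m n b))
    (hplay : Play color c₀ l)
    (hwin : AllOnSuits (finalConfig c₀ l)) :
    (l.map Prod.fst).count MoveType.turn = m * n ∧
    (l.map Prod.fst).count MoveType.toSuit = m * n ∧
    (l.map Prod.fst).count MoveType.block ≤ m * n ∧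
    l.length ≤ 3 * (m * n) := by
  have hturn := hplay.potential_eq Step.buildSum_faceDown_add
  have htoSuit := hplay.potential_eq Step.buildSum_length_add
  have hblock := hplay.potential_add_le Step.buildSum_countNotOnFaceUp_add_le
  rw [hinit.buildSum_eq fun _ h => List.countP_eq_length.mpr fun y hy => by simp [h y hy],
    hwin.buildSum_eq_zero rfl] at hturn
  rw [hinit.buildSum_eq fun _ _ => rfl, hwin.buildSum_eq_zero rfl] at htoSuit
  rw [hinit.buildSum_eq fun _ => countNotOnFaceUp_of_faceDown,
    hwin.buildSum_eq_zero rfl] at hblock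
  have hlength := MoveType.length_eq_count_add_count_add_count (l.map Prod.fst)
  rw [List.length_map] at hlength
  omega
end

section
/- There exists a Nonogram on an 11×11 grid (the AND gadget) with three designated cells a, b and c such that the set of values taken on (a,b,c) over all solutions (writing 1 for black and 0 for white) is exactly {(0,0,1),(1,0,1),(0,1,1),(1,1,0),(1,1,1)}, and each of these five triples is attained by exactly one solution. -/
/-!
Rows 2 to 8 have description `[11]`, so they are black in every solution and each column is
determined by its four cells in rows 0, 1, 9 and 10. The column descriptions leave at most three
such states per column, 324 combinations in all; the remaining four row descriptions cut these
down to exactly five solutions, which the cells `(1, 6)`, `(9, 0)`, `(9, 6)` tell apart.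
-/

/-! Nonograms.  A cell is `true` when black. -/

namespace Nonogram

/-- The lengths of the maximal runs of consecutive black (`true`) cells of a line. -/
def runs (l : List Bool) : List ℕ :=
  ((l.splitOnP fun b => !b).map List.length).filter fun k => k ≠ 0

/-- A solution of the Nonogram with row descriptions `rowD` and column
descriptions `colD`: every row and every column adheres to its description. -/
def IsSol {m n : ℕ} (rowD : Fin m → List ℕ) (colD : Fin n → List ℕ)
    (cells : Fin m → Fin n → Bool) : Prop :=
  (∀ i, runs (List.ofFn fun j => cells i j) = rowD i) ∧
  (∀ j, runs (List.ofFn fun i => cells i j) = colD j)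

end Nonogram

lemma existsUnique_and_eq_of_injective_comp {α β ι : Type*} {P : α → Prop} {sol : ι → α}
    (hP : ∀ x, P x ↔ ∃ k, x = sol k) {f : α → β} (hf : Function.Injective (f ∘ sol)) (k : ι) :
    ∃! x, P x ∧ f x = f (sol k) := by
  refine ⟨sol k, ⟨(hP _).2 ⟨k, rfl⟩, rfl⟩, ?_⟩
  rintro x ⟨hx, hfx⟩
  obtain ⟨k', rfl⟩ := (hP x).1 hx
  rw [hf hfx]

namespace Nonogram

@[simp]
lemma runs_cons_false (l : List Bool) : runs (false :: l) = runs l := by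
  simp [runs, List.splitOnP_cons_eq_if_modifyHead]

lemma sum_runs_cons_true (l : List Bool) : (runs (true :: l)).sum = (runs l).sum + 1 := by
  obtain ⟨c, cs, hc⟩ := List.exists_cons_of_ne_nil (List.splitOnP_ne_nil _ l)
  unfold runs
  rw [List.splitOnP_cons_eq_if_modifyHead, hc]
  simp only [Bool.not_true, List.modifyHead, List.map_cons, List.filter_cons]
  by_cases hc : c.length = 0 <;> simp [hc] <;> omega

lemma sum_runs (l : List Bool) : (runs l).sum = l.count true := by
  induction l with
  | nil => rfl
  | cons b l ih => cases b <;> simp [sum_runs_cons_true, ih]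

lemma eq_true_of_runs_ofFn_eq_singleton {n : ℕ} {v : Fin n → Bool}
    (h : runs (List.ofFn v) = [n]) (j : Fin n) : v j = true := by
  have hcount : (List.ofFn v).count true = (List.ofFn v).length := by
    rw [← sum_runs, h]; simp
  exact (List.count_eq_length.1 hcount _ (List.mem_ofFn.2 ⟨j, rfl⟩)).symm

end Nonogram

namespace AndGadget

open Nonogram

def rowD : Fin 11 → List ℕ :=
  ![[1, 1], [5, 2, 1], [11], [11], [11], [11], [11], [11], [11], [1, 1, 1], [1, 1, 2]]

def colD : Fin 11 → List ℕ :=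
  ![[9], [8], [8, 1], [9], [8, 1], [7], [9], [8, 1], [9], [1, 7], [8]]

/-- The cells of a column in rows `0`, `1`, `9` and `10`; rows `2` to `8` are forced black. -/
abbrev ColState := Bool × Bool × Bool × Bool

def column (s : ColState) : Fin 11 → Bool :=
  ![s.1, s.2.1, true, true, true, true, true, true, true, s.2.2.1, s.2.2.2]

def grid (s : Fin 11 → ColState) : Fin 11 → Fin 11 → Bool := fun i j => column (s j) i

def colState (cells : Fin 11 → Fin 11 → Bool) (j : Fin 11) : ColState :=
  (cells 0 j, cells 1 j, cells 9 j, cells 10 j)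

def candidates : Fin 11 → List ColState :=
  ![[(false, false, true, true), (false, true, true, false), (true, true, false, false)],
    [(false, false, true, false), (false, true, false, false)],
    [(false, true, false, true)],
    [(false, false, true, true), (false, true, true, false), (true, true, false, false)],
    [(false, true, false, true)],
    [(false, false, false, false)],
    [(false, false, true, true), (false, true, true, false), (true, true, false, false)],
    [(false, true, false, true)],
    [(false, false, true, true), (false, true, true, false), (true, true, false, false)],
    [(true, false, false, false)],
    [(false, false, true, false), (false, true, false, false)]]

def solution : Fin 5 → Fin 11 → ColState :=
  ![![(false, true, true, false), (false, true, false, false), (false, true, false, true),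
      (false, true, true, false), (false, true, false, true), (false, false, false, false),
      (true, true, false, false), (false, true, false, true), (false, false, true, true),
      (true, false, false, false), (false, true, false, false)],
    ![(false, true, true, false), (false, true, false, false), (false, true, false, true),
      (true, true, false, false), (false, true, false, true), (false, false, false, false),
      (false, false, true, true), (false, true, false, true), (false, true, true, false),
      (true, false, false, false), (false, true, false, false)],
    ![(false, true, true, false), (false, true, false, false), (false, true, false, true),
      (true, true, false, false), (false, true, false, true), (false, false, false, false),
      (false, true, true, false), (false, true, false, true), (false, false, true, true),
      (true, false, false, false), (false, true, false, false)],
    ![(true, true, false, false), (false, true, false, false), (false, true, false, true),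
      (false, true, true, false), (false, true, false, true), (false, false, false, false),
      (false, false, true, true), (false, true, false, true), (false, true, true, false),
      (true, false, false, false), (false, true, false, false)],
    ![(true, true, false, false), (false, true, false, false), (false, true, false, true),
      (false, true, true, false), (false, true, false, true), (false, false, false, false),
      (false, true, true, false), (false, true, false, true), (false, false, true, true),
      (true, false, false, false), (false, true, false, false)]]

lemma mem_candidates {j : Fin 11} {s : ColState} (h : runs (List.ofFn (column s)) = colD j) :
    s ∈ candidates j := by
  revert j s; decide

set_option maxRecDepth 8000 in
lemma exists_solution_of_mem_sections : ∀ l ∈ (List.ofFn candidates).sections,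
    runs (l.map (·.1)) = rowD 0 → runs (l.map (·.2.1)) = rowD 1 →
    runs (l.map (·.2.2.1)) = rowD 9 → runs (l.map (·.2.2.2)) = rowD 10 →
    ∃ k, l = List.ofFn (solution k) := by
  decide

lemma isSol_grid_solution (k : Fin 5) : IsSol rowD colD (grid (solution k)) := by
  constructor <;> revert k <;> decide

lemma eq_grid_colState {cells : Fin 11 → Fin 11 → Bool} (h : IsSol rowD colD cells) :
    cells = grid (colState cells) := by
  have full : ∀ i, rowD i = [11] → ∀ j, cells i j = true :=
    fun i hi => eq_true_of_runs_ofFn_eq_singleton ((h.1 i).trans hi)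
  funext i j
  fin_cases i <;> first | rfl | exact full _ rfl j

lemma ofFn_colState_mem_sections {cells : Fin 11 → Fin 11 → Bool} (h : IsSol rowD colD cells) :
    List.ofFn (colState cells) ∈ (List.ofFn candidates).sections := by
  rw [List.mem_sections, List.forall₂_iff_get]
  refine ⟨by simp, fun j _ _ => ?_⟩
  simp only [List.get_eq_getElem, List.getElem_ofFn]
  have hcol := h.2 ⟨j, by simpa using ‹j < _›⟩
  rw [eq_grid_colState h] at hcol
  exact mem_candidates hcol

lemma isSol_iff_exists_eq_grid_solution {cells : Fin 11 → Fin 11 → Bool} :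
    IsSol rowD colD cells ↔ ∃ k, cells = grid (solution k) := by
  refine ⟨fun h => ?_, fun ⟨k, hk⟩ => hk ▸ isSol_grid_solution k⟩
  obtain ⟨k, hk⟩ := exists_solution_of_mem_sections _ (ofFn_colState_mem_sections h)
    (by rw [List.map_ofFn]; exact h.1 0) (by rw [List.map_ofFn]; exact h.1 1)
    (by rw [List.map_ofFn]; exact h.1 9) (by rw [List.map_ofFn]; exact h.1 10)
  exact ⟨k, (eq_grid_colState h).trans (congrArg grid (List.ofFn_injective hk))⟩

def readout (cells : Fin 11 → Fin 11 → Bool) : Bool × Bool × Bool :=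
  (cells 1 6, cells 9 0, cells 9 6)

lemma injective_readout_grid_solution : Function.Injective (readout ∘ grid ∘ solution) := by
  decide

lemma range_readout_grid_solution :
    Set.range (readout ∘ grid ∘ solution) =
      {(false, false, true), (true, false, true), (false, true, true),
        (true, true, false), (true, true, true)} := by
  ext t
  simp only [Set.mem_range, Set.mem_insert_iff, Set.mem_singleton_iff]
  revert t
  decide

end AndGadget

open Nonogram in
/-- The AND gadget: there is an `11 × 11` Nonogram with three designated cells
`a`, `b`, `c` such that the set of values taken on `(a, b, c)` over all solutions
(`true` for black, `false` for white) is exactly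
`{(0,0,1), (1,0,1), (0,1,1), (1,1,0), (1,1,1)}`, each of these five triples being
attained by exactly one solution. -/
theorem nonogram_and_gadget :
    ∃ (rowD colD : Fin 11 → List ℕ) (a b c : Fin 11 × Fin 11),
      a ≠ b ∧ a ≠ c ∧ b ≠ c ∧
      (∀ cells : Fin 11 → Fin 11 → Bool, IsSol rowD colD cells →
        (cells a.1 a.2, cells b.1 b.2, cells c.1 c.2) ∈
          ({(false, false, true), (true, false, true), (false, true, true),
            (true, true, false), (true, true, true)} : Set (Bool × Bool × Bool))) ∧
      (∀ t ∈ ({(false, false, true), (true, false, true), (false, true, true),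
            (true, true, false), (true, true, true)} : Set (Bool × Bool × Bool)),
        ∃! cells : Fin 11 → Fin 11 → Bool,
          IsSol rowD colD cells ∧
          (cells a.1 a.2, cells b.1 b.2, cells c.1 c.2) = t) := by
  open AndGadget in
  refine ⟨rowD, colD, (1, 6), (9, 0), (9, 6), by decide, by decide, by decide, ?_, ?_⟩
  · intro cells h
    obtain ⟨k, rfl⟩ := isSol_iff_exists_eq_grid_solution.1 h
    exact range_readout_grid_solution ▸ ⟨k, rfl⟩
  · intro t ht
    rw [← range_readout_grid_solution] at ht
    obtain ⟨k, rfl⟩ := ht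
    exact existsUnique_and_eq_of_injective_comp (fun _ => isSol_iff_exists_eq_grid_solution) (f := readout)
      injective_readout_grid_solution k
end

section
/- In every solution of the Nonogram with 4 rows and 11 columns whose row descriptions are (3),(4),(4),(3) and whose column descriptions are (),(),(),(1),(4),(4),(4),(1),(),(),() (columns numbered 1 to 11), the cell in row 3 and column 4 is black if and only if the cell in row 3 and column 8 is white; thus a signal propagates across the three separation columns 5–7. -/
namespace Nonogram

/-- Row descriptions `(3), (4), (4), (3)` of the signal-propagation Nonogram. -/
def sigRowD : Fin 4 → List ℕ := ![[3], [4], [4], [3]]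

/-- Column descriptions `(), (), (), (1), (4), (4), (4), (1), (), (), ()`
(columns numbered 1 to 11). -/
def sigColD : Fin 11 → List ℕ := ![[], [], [], [1], [4], [4], [4], [1], [], [], []]

end Nonogram

namespace Nonogram

lemma col_empty (a b c d : Bool) (h : runs [a, b, c, d] = []) : c = false := by
  revert h; revert a b c d; decide

lemma col_full (a b c d : Bool) (h : runs [a, b, c, d] = [4]) : c = true := by
  revert h; revert a b c d; decide

lemma row_key (a b : Bool)
    (h : runs [false, false, false, a, true, true, true, b, false, false, false] = [4]) :
    (a = true ↔ b = false) := by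
  revert h; revert a b; decide

end Nonogram

open Nonogram in
/-- Signal propagation: in every solution of the Nonogram with 4 rows and 11
columns, row descriptions `(3),(4),(4),(3)` and column descriptions
`(),(),(),(1),(4),(4),(4),(1),(),(),()`, the cell in row 3 and column 4
(1-indexed; here `(2, 3)` 0-indexed) is black if and only if the cell in row 3 and
column 8 (here `(2, 7)`) is white. -/
theorem nonogram_signal_propagation :
    ∀ cells : Fin 4 → Fin 11 → Bool,
      IsSol sigRowD sigColD cells →
      (cells 2 3 = true ↔ cells 2 7 = false) := by
  intro cells hsol
  obtain ⟨hrow, hcol⟩ := hsol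
  have col : ∀ j : Fin 11, runs [cells 0 j, cells 1 j, cells 2 j, cells 3 j] = sigColD j := by
    intro j
    have := hcol j
    simpa [List.ofFn_succ] using this
  have h0 := col_empty _ _ _ _ (col 0)
  have h1 := col_empty _ _ _ _ (col 1)
  have h2 := col_empty _ _ _ _ (col 2)
  have h4 := col_full _ _ _ _ (col 4)
  have h5 := col_full _ _ _ _ (col 5)
  have h6 := col_full _ _ _ _ (col 6)
  have h8 := col_empty _ _ _ _ (col 8)
  have h9 := col_empty _ _ _ _ (col 9)
  have h10 := col_empty _ _ _ _ (col 10)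
  have hr : runs [cells 2 0, cells 2 1, cells 2 2, cells 2 3, cells 2 4, cells 2 5,
      cells 2 6, cells 2 7, cells 2 8, cells 2 9, cells 2 10] = [4] := by
    have := hrow 2
    simpa [List.ofFn_succ, sigRowD] using this
  rw [h0, h1, h2, h4, h5, h6, h8, h9, h10] at hr
  exact row_key _ _ hr
end
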